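/- arXiv:1303.6020 — 3 statements merged into one kernel-verified Lean document; each statement's English description precedes it below -/
import Mathlib

section
/- Let x ∈ {0, c_1, ..., c_m}ⁿ with 0 < c_1 < ... < c_m and at most d nonzero entries, and let w = max over 1 ≤ k ≤ m of (c_m − c_{k−1})/(c_k − c_{k−1}) (with c_0 = 0). Then any q-ary additive (w,d)-disjunct t×n matrix A determines x uniquely from the outcome vector v = Ax; i.e., if x, x' ∈ {0,c_1,...,c_m}ⁿ are both d-sparse and Ax = Ax', then x = x'. -/
/-- A matrix (with real entries, thought of as `q`-ary) is additive
`(w,d)`-disjunct if for every set `S` of at most `d` columns and every column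
`k ∉ S`, some row `i` satisfies `M i k > w * ∑_{j ∈ S} M i j`. -/
def AddDisjunct {t n : ℕ} (M : Fin t → Fin n → ℝ) (w : ℝ) (d : ℕ) : Prop :=
  ∀ S : Finset (Fin n), S.card ≤ d → ∀ k ∉ S, ∃ i, M i k > w * ∑ j ∈ S, M i j

/-- Entries of `M` belong to `{0,1,...,q-1}`. -/
def QaryEntries {t n : ℕ} (M : Fin t → Fin n → ℝ) (q : ℕ) : Prop :=
  ∀ i j, ∃ a : ℕ, a < q ∧ M i j = a

/-!
Suppose `x ≠ x'` and pick a disagreeing coordinate `k` at which `min (x k) (x' k)` is least,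
say `x k = c s < x' k`. Disjunctness applied to the support of `x` minus `k` gives a row `i`
with `A i k > w · T`, where `T` is the row sum over that support. In the row difference
`∑ j, A i j (x' j - x j) = 0`, the `k`-th term exceeds `w (c_{s+1} - c_s) T ≥ (c_m - c_s) T`;
on the support every difference is at least `c_s - c_m`, by minimality of `k`; off the support
`x' j - x j = x' j ≥ 0`. So the row difference is positive, a contradiction.
-/

lemma QaryEntries.nonneg {t n q : ℕ} {A : Fin t → Fin n → ℝ} (hq : QaryEntries A q)
    (i : Fin t) (j : Fin n) : 0 ≤ A i j := by
  obtain ⟨a, -, ha⟩ := hq i j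
  rw [ha]
  exact a.cast_nonneg

lemma sum_mul_pos_of_dominant {ι : Type*} [Fintype ι] [DecidableEq ι] {a z : ι → ℝ} {w B : ℝ}
    {S : Finset ι} {k : ι} (hkS : k ∉ S) (ha : ∀ j, 0 ≤ a j)
    (hdom : w * ∑ j ∈ S, a j < a k) (hzk : 0 < z k) (hB : B ≤ w * z k)
    (hS : ∀ j ∈ S, -B ≤ z j) (hrest : ∀ j ∉ S, j ≠ k → 0 ≤ z j) :
    0 < ∑ j, a j * z j := by
  set T := ∑ j ∈ S, a j
  have hT : 0 ≤ T := Finset.sum_nonneg fun j _ => ha j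
  have hgain : B * T < a k * z k :=
    calc B * T ≤ w * z k * T := mul_le_mul_of_nonneg_right hB hT
      _ = w * T * z k := by ring
      _ < a k * z k := mul_lt_mul_of_pos_right hdom hzk
  have hloss : -(B * T) ≤ ∑ j ∈ S, a j * z j := by
    rw [← neg_mul, mul_comm, Finset.sum_mul]
    exact Finset.sum_le_sum fun j hj => mul_le_mul_of_nonneg_left (hS j hj) (ha j)
  have hS_sub : S ⊆ Finset.univ.erase k := fun j hj =>
    Finset.mem_erase.2 ⟨fun h => hkS (h ▸ hj), Finset.mem_univ j⟩
  have hothers : ∑ j ∈ S, a j * z j ≤ ∑ j ∈ Finset.univ.erase k, a j * z j :=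
    Finset.sum_le_sum_of_subset_of_nonneg hS_sub fun j hj hjS =>
      mul_nonneg (ha j) (hrest j hjS (Finset.ne_of_mem_erase hj))
  rw [← Finset.add_sum_erase _ _ (Finset.mem_univ k)]
  linarith

section Levels

variable {m : ℕ} {c : Fin (m + 1) → ℝ} {w : ℝ}

lemma le_last_of_mem_range (hmono : StrictMono c) {y : ℝ} (hy : y ∈ Set.range c) :
    y ≤ c (Fin.last m) := by
  obtain ⟨r, rfl⟩ := hy
  exact hmono.monotone (Fin.le_last r)

lemma nonneg_of_mem_range (hc0 : c 0 = 0) (hmono : StrictMono c) {y : ℝ}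
    (hy : y ∈ Set.range c) : 0 ≤ y := by
  obtain ⟨r, rfl⟩ := hy
  exact hc0 ▸ hmono.monotone (Fin.zero_le r)

/-- An upward step from `a = c_s` is at least the gap `c_{s+1} - c_s`, which `hw` controls. -/
lemma last_sub_le_mul_sub_of_lt (hmono : StrictMono c)
    (hw : ∀ k : Fin m, (c (Fin.last m) - c k.castSucc) / (c k.succ - c k.castSucc) ≤ w)
    {a b : ℝ} (ha : a ∈ Set.range c) (hb : b ∈ Set.range c) (hab : a < b) :
    c (Fin.last m) - a ≤ w * (b - a) := by
  obtain ⟨s, rfl⟩ := ha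
  obtain ⟨r, rfl⟩ := hb
  have hsr : s < r := hmono.lt_iff_lt.1 hab
  obtain ⟨s', rfl⟩ : ∃ s' : Fin m, s'.castSucc = s :=
    ⟨⟨s, lt_of_lt_of_le hsr (Fin.le_last r)⟩, rfl⟩
  have hgap : 0 < c s'.succ - c s'.castSucc := sub_pos.2 (hmono Fin.castSucc_lt_succ)
  have hstep : c s'.succ ≤ c r := hmono.monotone (Fin.castSucc_lt_iff_succ_le.1 hsr)
  have hbound : c (Fin.last m) - c s'.castSucc ≤ w * (c s'.succ - c s'.castSucc) :=
    (div_le_iff₀ hgap).1 (hw s')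
  have hw0 : 0 ≤ w := le_trans (div_nonneg
    (sub_nonneg.2 (le_last_of_mem_range hmono ⟨_, rfl⟩)) hgap.le) (hw s')
  calc c (Fin.last m) - c s'.castSucc ≤ w * (c s'.succ - c s'.castSucc) := hbound
    _ ≤ w * (c r - c s'.castSucc) := mul_le_mul_of_nonneg_left (by linarith) hw0

end Levels

lemma exists_min_disagreement {ι α : Type*} [Finite ι] [LinearOrder α] {x x' : ι → α}
    (hne : x ≠ x') :
    ∃ k, x k ≠ x' k ∧ ∀ j, x j ≠ x' j → min (x k) (x' k) ≤ min (x j) (x' j) := by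
  obtain ⟨j₀, hj₀⟩ := Function.ne_iff.1 hne
  obtain ⟨k, hk, hmin⟩ := Set.Finite.exists_minimalFor (fun j => min (x j) (x' j))
    {j | x j ≠ x' j} (Set.toFinite _) ⟨j₀, hj₀⟩
  exact ⟨k, hk, fun j hj => le_of_not_gt fun hlt => (hmin hj hlt.le).not_gt hlt⟩

lemma AddDisjunct.not_lt_at_min_disagreement {t n m d : ℕ} {A : Fin t → Fin n → ℝ}
    (hA : ∀ i j, 0 ≤ A i j) {c : Fin (m + 1) → ℝ} (hc0 : c 0 = 0) (hmono : StrictMono c)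
    {w : ℝ} (hw : ∀ k : Fin m, (c (Fin.last m) - c k.castSucc) / (c k.succ - c k.castSucc) ≤ w)
    (hdisj : AddDisjunct A w d) {x x' : Fin n → ℝ}
    (halpha : ∀ j, x j ∈ Set.range c) (halpha' : ∀ j, x' j ∈ Set.range c)
    (hsparse : ∃ S : Finset (Fin n), S.card ≤ d ∧ ∀ j ∉ S, x j = 0)
    (houtcome : ∀ i, ∑ j, A i j * x j = ∑ j, A i j * x' j)
    {k : Fin n} (hmin : ∀ j, x j ≠ x' j → x k ≤ x j ∧ x k ≤ x' j) :
    ¬ x k < x' k := by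
  intro hk
  obtain ⟨S₀, hS₀card, hS₀⟩ := hsparse
  obtain ⟨i, hi⟩ := hdisj (S₀.erase k) ((Finset.card_erase_le).trans hS₀card) k
    (Finset.notMem_erase k S₀)
  have hpos : 0 < ∑ j, A i j * (x' j - x j) := by
    refine sum_mul_pos_of_dominant (B := c (Fin.last m) - x k) (Finset.notMem_erase k S₀)
      (hA i) hi (sub_pos.2 hk)
      (last_sub_le_mul_sub_of_lt hmono hw (halpha k) (halpha' k) hk) ?_ ?_
    · intro j _
      have hxj := le_last_of_mem_range hmono (halpha j)
      by_cases hj : x j = x' j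
      · have := le_last_of_mem_range hmono (halpha k)
        linarith
      · linarith [(hmin j hj).2]
    · intro j hjS hjk
      rw [hS₀ j fun hj => hjS (Finset.mem_erase.2 ⟨hjk, hj⟩), sub_zero]
      exact nonneg_of_mem_range hc0 hmono (halpha' j)
  have hzero : ∑ j, A i j * (x' j - x j) = 0 := by
    simp only [mul_sub, Finset.sum_sub_distrib, houtcome i, sub_self]
  exact hpos.ne' hzero

theorem one_sided_identification_general (q t n m d : ℕ)
    (A : Fin t → Fin n → ℝ) (hq : QaryEntries A q)
    (c : Fin (m + 1) → ℝ) (hc0 : c 0 = 0) (hmono : StrictMono c)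
    (w : ℝ)
    (hw : ∀ k : Fin m, (c (Fin.last m) - c k.castSucc) / (c k.succ - c k.castSucc) ≤ w)
    (hdisj : AddDisjunct A w d)
    (x x' : Fin n → ℝ)
    (halpha : ∀ j, x j ∈ Set.range c) (halpha' : ∀ j, x' j ∈ Set.range c)
    (hsparse : ∃ S : Finset (Fin n), S.card ≤ d ∧ ∀ j ∉ S, x j = 0)
    (hsparse' : ∃ S : Finset (Fin n), S.card ≤ d ∧ ∀ j ∉ S, x' j = 0)
    (houtcome : ∀ i, ∑ j, A i j * x j = ∑ j, A i j * x' j) :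
    x = x' := by
  by_contra hne
  obtain ⟨k, hk, hmin⟩ := exists_min_disagreement hne
  rcases hk.lt_or_gt with hlt | hlt
  · refine hdisj.not_lt_at_min_disagreement hq.nonneg hc0 hmono hw halpha halpha' hsparse
      houtcome (fun j hj => ?_) hlt
    simpa [min_eq_left hlt.le] using hmin j hj
  · refine hdisj.not_lt_at_min_disagreement hq.nonneg hc0 hmono hw halpha' halpha hsparse'
      (fun i => (houtcome i).symm) (fun j hj => ?_) hlt
    simpa [min_eq_right hlt.le, and_comm] using hmin j (Ne.symm hj)

/-- Corollary `ipg`: identification in the one-sided case. -/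
theorem one_sided_identification (q t n m d : ℕ) (hm : 1 ≤ m)
    (A : Fin t → Fin n → ℝ) (hq : QaryEntries A q)
    (c : Fin (m + 1) → ℝ) (hc0 : c 0 = 0) (hmono : StrictMono c)
    (w : ℝ)
    (hw : ∀ k : Fin m, (c (Fin.last m) - c k.castSucc) / (c k.succ - c k.castSucc) ≤ w)
    (hdisj : AddDisjunct A w d)
    (x x' : Fin n → ℝ)
    (halpha : ∀ j, x j ∈ Set.range c) (halpha' : ∀ j, x' j ∈ Set.range c)
    (hsparse : ∃ S : Finset (Fin n), S.card ≤ d ∧ ∀ j ∉ S, x j = 0)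
    (hsparse' : ∃ S : Finset (Fin n), S.card ≤ d ∧ ∀ j ∉ S, x' j = 0)
    (houtcome : ∀ i, ∑ j, A i j * x j = ∑ j, A i j * x' j) :
    x = x' :=
  one_sided_identification_general q t n m d A hq c hc0 hmono w hw hdisj x x' halpha halpha' hsparse
    hsparse' houtcome
end

section
/- Let A be a transversal binary d-disjunct matrix of size t×n, whose rows are partitioned into disjoint families (rows within a family are pairwise disjoint), and let f_{d+2}(A) be the number of families of size at least d+2. Then for any q ≥ wd+2, there exists a q-ary additive (w,d)-disjunct matrix of size (t − f_{d+2}(A)) × n. -/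
/-- Classical binary `d`-disjunctness. -/
def BinDisjunct {t n : ℕ} (M : Fin t → Fin n → ℝ) (d : ℕ) : Prop :=
  ∀ S : Finset (Fin n), S.card ≤ d → ∀ k ∉ S,
    ∃ i, M i k = 1 ∧ ∀ j ∈ S, M i j = 0

open Finset in
/-- Corollary to Theorem `wd`: from a transversal `d`-disjunct
binary matrix `A` one obtains a `q`-ary additive `(w,d)`-disjunct matrix with
`t - f_{d+2}(A)` rows, where the partition into families is recorded by
`fam : Fin t → Fin F`. -/
theorem transversal_construction (t n d F : ℕ) (w q : ℕ) (hw : 0 < w)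
    (hq : w * d + 2 ≤ q)
    (A : Fin t → Fin n → ℝ)
    (hbin : ∀ i j, A i j = 0 ∨ A i j = 1)
    (hdisjA : BinDisjunct A d)
    (fam : Fin t → Fin F)
    (htrans : ∀ i i' : Fin t, i ≠ i' → fam i = fam i' →
      ∀ j, A i j = 0 ∨ A i' j = 0) :
    ∃ M : Fin (t - (univ.filter
        (fun g : Fin F => d + 2 ≤ (univ.filter (fun i => fam i = g)).card)).card)
        → Fin n → ℝ,
      QaryEntries M q ∧ AddDisjunct M (w : ℝ) d := by
  classical
  set bigs : Finset (Fin F) :=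
    univ.filter (fun g : Fin F => d + 2 ≤ (univ.filter (fun i => fam i = g)).card)
    with hbigs
  have hex : ∀ g ∈ bigs, ∃ i : Fin t, fam i = g := by
    intro g hg
    rw [hbigs, mem_filter] at hg
    have h2 : 0 < (univ.filter (fun i : Fin t => fam i = g)).card := by omega
    obtain ⟨i, hi⟩ := Finset.card_pos.mp h2
    exact ⟨i, (mem_filter.mp hi).2⟩
  choose top htop using hex
  set tops : Finset (Fin t) := bigs.attach.image (fun x => top x.1 x.2) with htops
  have htopscard : tops.card = bigs.card := by
    rw [htops, Finset.card_image_of_injOn, Finset.card_attach]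
    intro x _ y _ hxy
    have h1 := htop x.1 x.2
    have h2 := htop y.1 y.2
    have hxy' : top x.1 x.2 = top y.1 y.2 := hxy
    apply Subtype.ext
    rw [← h1, ← h2, hxy']
  set surv : Finset (Fin t) := univ \ tops with hsurv
  have hsurvcard : surv.card = t - bigs.card := by
    rw [hsurv, Finset.card_sdiff_of_subset (subset_univ _), card_univ, Fintype.card_fin, htopscard]
  set emb : Fin (t - bigs.card) → Fin t :=
    fun i' => ((surv.equivFin.symm (Fin.cast hsurvcard.symm i')) : Fin t) with hembdef
  have hemb : ∀ i', emb i' ∈ surv := fun i' => (surv.equivFin.symm _).2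
  have hembsurj : ∀ i ∈ surv, ∃ i', emb i' = i := by
    intro i hi
    refine ⟨Fin.cast hsurvcard (surv.equivFin ⟨i, hi⟩), ?_⟩
    have : (Fin.cast hsurvcard.symm (Fin.cast hsurvcard (surv.equivFin ⟨i, hi⟩)))
        = surv.equivFin ⟨i, hi⟩ := rfl
    rw [hembdef]
    simp [this]
  have hnotop : ∀ i ∈ surv, ∀ g, ∀ hg : g ∈ bigs, i ≠ top g hg := by
    intro i hi g hg h
    apply (mem_sdiff.mp hi).2
    rw [htops]
    exact mem_image.mpr ⟨⟨g, hg⟩, mem_attach _ _, h.symm⟩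
  -- the matrix
  refine ⟨fun i' j => if h : fam (emb i') ∈ bigs
      then ((w * d + 1 : ℕ) : ℝ) * A (emb i') j + A (top (fam (emb i')) h) j
      else A (emb i') j, ?_, ?_⟩
  · -- QaryEntries
    intro i j
    dsimp only
    by_cases h : fam (emb i) ∈ bigs
    · rw [dif_pos h]
      have hne : emb i ≠ top (fam (emb i)) h := hnotop _ (hemb i) _ h
      have hfam : fam (emb i) = fam (top (fam (emb i)) h) := (htop _ h).symm
      rcases hbin (emb i) j with h1 | h1 <;> rcases hbin (top (fam (emb i)) h) j with h2 | h2
      · exact ⟨0, by omega, by rw [h1, h2]; push_cast; ring⟩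
      · exact ⟨1, by omega, by rw [h1, h2]; push_cast; ring⟩
      · exact ⟨w * d + 1, by omega, by rw [h1, h2]; push_cast; ring⟩
      · exfalso
        rcases htrans _ _ hne hfam j with h3 | h3
        · rw [h1] at h3; norm_num at h3
        · rw [h2] at h3; norm_num at h3
    · rw [dif_neg h]
      rcases hbin (emb i) j with h1 | h1
      · exact ⟨0, by omega, by rw [h1]; norm_num⟩
      · exact ⟨1, by omega, by rw [h1]; norm_num⟩
  · -- AddDisjunct
    intro S hS k hk
    obtain ⟨r, hrk, hrS⟩ := hdisjA S hS k hk
    by_cases hr : r ∈ surv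
    · obtain ⟨i', hi'⟩ := hembsurj r hr
      refine ⟨i', ?_⟩
      dsimp only
      simp only [hi']
      by_cases hb : fam r ∈ bigs
      · simp only [dif_pos hb]
        have hne : r ≠ top (fam r) hb := hnotop _ hr _ hb
        have hfam : fam r = fam (top (fam r) hb) := (htop _ hb).symm
        have htpk : A (top (fam r) hb) k = 0 := by
          rcases htrans _ _ hne hfam k with h3 | h3
          · rw [hrk] at h3; norm_num at h3
          · exact h3
        have hsum : ∑ j ∈ S, (((w * d + 1 : ℕ) : ℝ) * A r j + A (top (fam r) hb) j)
            = ∑ j ∈ S, A (top (fam r) hb) j := by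
          apply Finset.sum_congr rfl
          intro j hj
          rw [hrS j hj]; ring
        have hbound : ∑ j ∈ S, A (top (fam r) hb) j ≤ (d : ℝ) := by
          calc ∑ j ∈ S, A (top (fam r) hb) j ≤ ∑ _j ∈ S, (1 : ℝ) := by
                apply Finset.sum_le_sum
                intro j hj
                rcases hbin (top (fam r) hb) j with h3 | h3 <;> rw [h3] <;> norm_num
            _ = (S.card : ℝ) := by rw [Finset.sum_const]; simp
            _ ≤ (d : ℝ) := by exact_mod_cast hS
        rw [hsum, hrk, htpk]
        have hwb : (w : ℝ) * ∑ j ∈ S, A (top (fam r) hb) j ≤ (w : ℝ) * d :=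
          mul_le_mul_of_nonneg_left hbound (by positivity)
        push_cast
        linarith
      · simp only [dif_neg hb]
        rw [hrk]
        have hsum : ∑ j ∈ S, A r j = 0 := Finset.sum_eq_zero hrS
        rw [hsum]
        norm_num
    · -- r is a removed top row
      have hrt : r ∈ tops := by
        by_contra hcon
        exact hr (mem_sdiff.mpr ⟨mem_univ r, hcon⟩)
      rw [htops] at hrt
      obtain ⟨⟨g, hg⟩, -, hgr⟩ := mem_image.mp hrt
      have hfamr : fam r = g := by rw [← hgr]; exact htop g hg
      have hfs : d + 2 ≤ (univ.filter (fun i : Fin t => fam i = g)).card := by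
        have := (mem_filter.mp (hbigs ▸ hg)).2
        exact this
      set fs : Finset (Fin t) := univ.filter (fun i : Fin t => fam i = g) with hfsdef
      set bad : Finset (Fin t) := fs.filter (fun i => ∃ j ∈ S, A i j ≠ 0) with hbaddef
      have hbadcard : bad.card ≤ S.card := by
        rcases Finset.eq_empty_or_nonempty S with hS0 | ⟨j0, hj0⟩
        · have : bad = ∅ := by
            rw [hbaddef, hS0]
            simp
          rw [this]; simp
        · set wit : Fin t → Fin n := fun i =>
            if h : ∃ j ∈ S, A i j ≠ 0 then h.choose else j0 with hwit
          have hwitmem : ∀ i ∈ bad, wit i ∈ S ∧ A i (wit i) ≠ 0 := by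
            intro i hi
            have hcond : ∃ j ∈ S, A i j ≠ 0 := (mem_filter.mp hi).2
            have heq : wit i = hcond.choose := by
              rw [hwit]; exact dif_pos hcond
            rw [heq]
            exact ⟨hcond.choose_spec.1, hcond.choose_spec.2⟩
          apply Finset.card_le_card_of_injOn wit (fun i hi => (hwitmem i hi).1)
          intro i hi i2 hi2 hww
          by_contra hne
          have hfi : fam i = fam i2 := by
            rw [(mem_filter.mp (mem_filter.mp hi).1).2,
              (mem_filter.mp (mem_filter.mp hi2).1).2]
          rcases htrans i i2 hne hfi (wit i) with h3 | h3
          · exact (hwitmem i hi).2 h3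
          · rw [hww] at h3
            exact (hwitmem i2 hi2).2 h3
      have hgood : 0 < (fs \ insert r bad).card := by
        have h1 : (insert r bad).card ≤ bad.card + 1 := Finset.card_insert_le r bad
        have h2 : fs.card - (insert r bad).card ≤ (fs \ insert r bad).card :=
          Finset.le_card_sdiff _ _
        omega
      obtain ⟨i, hi⟩ := Finset.card_pos.mp hgood
      have hifs : i ∈ fs := (mem_sdiff.mp hi).1
      have hig : fam i = g := (mem_filter.mp hifs).2
      have hinr : i ≠ r := by
        intro h
        exact (mem_sdiff.mp hi).2 (h ▸ Finset.mem_insert_self r bad)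
      have hiS : ∀ j ∈ S, A i j = 0 := by
        intro j hj
        by_contra hcon
        apply (mem_sdiff.mp hi).2
        apply Finset.mem_insert_of_mem
        rw [hbaddef]
        exact mem_filter.mpr ⟨hifs, ⟨j, hj, hcon⟩⟩
      have hisurv : i ∈ surv := by
        rw [hsurv, mem_sdiff]
        refine ⟨mem_univ i, ?_⟩
        intro hcon
        rw [htops] at hcon
        obtain ⟨⟨g', hg'⟩, -, hg'i⟩ := mem_image.mp hcon
        have : g' = g := by rw [← hig, ← hg'i]; exact (htop g' hg').symm
        subst this
        exact hinr (by rw [← hg'i, hgr])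
      obtain ⟨i', hi'⟩ := hembsurj i hisurv
      refine ⟨i', ?_⟩
      dsimp only
      simp only [hi']
      have hib : fam i ∈ bigs := by rw [hig]; exact hg
      simp only [dif_pos hib]
      have htopi : top (fam i) hib = r := by
        have : top (fam i) hib = top g hg := by
          congr 1
        rw [this, hgr]
      rw [htopi]
      have hik : A i k = 0 := by
        rcases htrans i r hinr (by rw [hig, hfamr]) k with h3 | h3
        · exact h3
        · rw [hrk] at h3; norm_num at h3
      have hsum : ∑ j ∈ S, (((w * d + 1 : ℕ) : ℝ) * A i j + A r j) = 0 := by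
        apply Finset.sum_eq_zero
        intro j hj
        rw [hiS j hj, hrS j hj]; ring
      rw [hrk, hik, hsum]
      norm_num
end

section
/- With u = c_m·d ≥ 2, A binary with nonnegative entries, and x = (x_1, ..., x_{n'}) where each block x_j ∈ {0, c_1, ..., c_m}ⁿ and the total number of nonzero entries is at most d: if v = ∑_{j=1}^{n'} ((u^j−1)/(u−1)) A x_j, then each entry of ∑_{j=1}^{n'−1} ((u^j−1)/(u−1)) A x_j is strictly less than (u^{n'}−1)/(u−1), and consequently the floor of ((u−1)/(u^{n'}−1))·v equals A x_{n'} entrywise (assuming entries of A x_{n'} are integers). -/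
/-- the key estimate for decoding the concatenated construction.
The blocks are indexed by `Fin (n'+1)` (so there are `n' + 1 ≥ 1` blocks, the
last one playing the role of `x_{n'}` in the paper), and block `j` carries the
coefficient `(u^{j+1} - 1)/(u - 1)`. -/
theorem concatenation_decoding_step (t n n' m d : ℕ) (hm : 1 ≤ m)
    (A : Matrix (Fin t) (Fin n) ℝ)
    (hAbin : ∀ i j, A i j = 0 ∨ A i j = 1)
    (c : Fin (m + 1) → ℕ) (hc0 : c 0 = 0) (hcmono : StrictMono c)
    (u : ℕ) (hu : u = c (Fin.last m) * d) (hu2 : 2 ≤ u)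
    (x : Fin (n' + 1) → Fin n → ℝ)
    (halpha : ∀ j a, ∃ i : Fin (m + 1), x j a = (c i : ℝ))
    (hsparse : ∃ S : Finset (Fin (n' + 1) × Fin n), S.card ≤ d ∧
      ∀ p ∉ S, x p.1 p.2 = 0)
    (v : Fin t → ℝ)
    (hv : ∀ i, v i =
      ∑ j : Fin (n' + 1), (((u : ℝ) ^ (j.1 + 1) - 1) / ((u : ℝ) - 1))
        * A.mulVec (x j) i) :
    (∀ i, ∑ j : Fin n', (((u : ℝ) ^ (j.1 + 1) - 1) / ((u : ℝ) - 1))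
        * A.mulVec (x j.castSucc) i
      < ((u : ℝ) ^ (n' + 1) - 1) / ((u : ℝ) - 1)) ∧
    (∀ i, (⌊((u : ℝ) - 1) / ((u : ℝ) ^ (n' + 1) - 1) * v i⌋ : ℝ)
      = A.mulVec (x (Fin.last n')) i) := by
  obtain ⟨S, hScard, hS⟩ := hsparse
  set U : ℝ := (u : ℝ) with hU
  have hu1 : (1:ℝ) < U := by
    have h2 : (2:ℝ) ≤ (u:ℝ) := by exact_mod_cast hu2
    rw [hU]; linarith
  have hUm1 : (0:ℝ) < U - 1 := by linarith
  have hx0 : ∀ j a, 0 ≤ x j a := by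
    intro j a; obtain ⟨i, hi⟩ := halpha j a; rw [hi]; positivity
  have hxcm : ∀ j a, x j a ≤ (c (Fin.last m) : ℝ) := by
    intro j a; obtain ⟨i, hi⟩ := halpha j a; rw [hi]
    exact_mod_cast hcmono.monotone (Fin.le_last i)
  have hA0 : ∀ i a, 0 ≤ A i a := by
    intro i a; rcases hAbin i a with h | h <;> rw [h] <;> norm_num
  have hA1 : ∀ i a, A i a ≤ 1 := by
    intro i a; rcases hAbin i a with h | h <;> rw [h] <;> norm_num
  have hmv0 : ∀ j i, 0 ≤ A.mulVec (x j) i := by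
    intro j i
    simp only [Matrix.mulVec, dotProduct]
    exact Finset.sum_nonneg fun a _ => mul_nonneg (hA0 i a) (hx0 j a)
  -- integrality of A.mulVec (x j) i
  have hint : ∀ j i, ∃ N : ℕ, A.mulVec (x j) i = (N : ℝ) := by
    intro j i
    have hterm : ∀ a : Fin n, ∃ N : ℕ, A i a * x j a = (N : ℝ) := by
      intro a
      rcases hAbin i a with h | h
      · exact ⟨0, by rw [h]; simp⟩
      · obtain ⟨k, hk⟩ := halpha j a
        exact ⟨c k, by rw [h, hk, one_mul]⟩
    choose g hg using hterm
    refine ⟨∑ a, g a, ?_⟩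
    simp only [Matrix.mulVec, dotProduct]
    rw [Nat.cast_sum]
    exact Finset.sum_congr rfl fun a _ => hg a
  -- total sum bound
  have hsumU : ∀ i, ∑ j : Fin (n' + 1), A.mulVec (x j) i ≤ U := by
    intro i
    have h1 : ∑ j : Fin (n' + 1), A.mulVec (x j) i
        = ∑ p : Fin (n' + 1) × Fin n, A i p.2 * x p.1 p.2 := by
      simp only [Matrix.mulVec, dotProduct]
      rw [Fintype.sum_prod_type]
    have h2 : ∑ p : Fin (n' + 1) × Fin n, A i p.2 * x p.1 p.2
        = ∑ p ∈ S, A i p.2 * x p.1 p.2 := by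
      refine (Finset.sum_subset S.subset_univ ?_).symm
      intro p _ hp
      rw [hS p hp, mul_zero]
    have h3 : ∑ p ∈ S, A i p.2 * x p.1 p.2
        ≤ ∑ p ∈ S, (c (Fin.last m) : ℝ) := by
      refine Finset.sum_le_sum fun p _ => ?_
      calc A i p.2 * x p.1 p.2 ≤ 1 * x p.1 p.2 :=
            mul_le_mul_of_nonneg_right (hA1 i p.2) (hx0 p.1 p.2)
        _ = x p.1 p.2 := one_mul _
        _ ≤ (c (Fin.last m) : ℝ) := hxcm p.1 p.2
    have h4 : ∑ p ∈ S, ((c (Fin.last m) : ℕ) : ℝ)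
        = (S.card : ℝ) * (c (Fin.last m) : ℝ) := by
      rw [Finset.sum_const, nsmul_eq_mul]
    have h5 : (S.card : ℝ) * (c (Fin.last m) : ℝ)
        ≤ (d : ℝ) * (c (Fin.last m) : ℝ) := by
      apply mul_le_mul_of_nonneg_right _ (by positivity)
      exact_mod_cast hScard
    have h6 : (d : ℝ) * (c (Fin.last m) : ℝ) = U := by
      rw [hU, hu]; push_cast; ring
    rw [h1, h2]
    calc ∑ p ∈ S, A i p.2 * x p.1 p.2 ≤ _ := h3
      _ = (S.card : ℝ) * (c (Fin.last m) : ℝ) := h4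
      _ ≤ (d : ℝ) * (c (Fin.last m) : ℝ) := h5
      _ = U := h6
  -- partial sum bound (over the first n' blocks)
  have hpartU : ∀ i, ∑ j : Fin n', A.mulVec (x j.castSucc) i ≤ U := by
    intro i
    have := hsumU i
    rw [Fin.sum_univ_castSucc] at this
    have hlast := hmv0 (Fin.last n') i
    linarith
  -- part 1
  have part1 : ∀ i, ∑ j : Fin n', ((U ^ (j.1 + 1) - 1) / (U - 1))
      * A.mulVec (x j.castSucc) i < (U ^ (n' + 1) - 1) / (U - 1) := by
    intro i
    have hC0 : (0:ℝ) ≤ (U ^ n' - 1) / (U - 1) := by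
      apply div_nonneg _ hUm1.le
      have : (1:ℝ) ≤ U ^ n' := one_le_pow₀ hu1.le
      linarith
    have hstep1 : ∑ j : Fin n', ((U ^ (j.1 + 1) - 1) / (U - 1))
        * A.mulVec (x j.castSucc) i
        ≤ ((U ^ n' - 1) / (U - 1)) * ∑ j : Fin n', A.mulVec (x j.castSucc) i := by
      rw [Finset.mul_sum]
      refine Finset.sum_le_sum fun j _ => ?_
      apply mul_le_mul_of_nonneg_right _ (hmv0 _ i)
      gcongr
      · exact hu1.le
      · exact j.2
    have hstep2 : ((U ^ n' - 1) / (U - 1)) * ∑ j : Fin n', A.mulVec (x j.castSucc) i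
        ≤ ((U ^ n' - 1) / (U - 1)) * U :=
      mul_le_mul_of_nonneg_left (hpartU i) hC0
    have hstep3 : ((U ^ n' - 1) / (U - 1)) * U < (U ^ (n' + 1) - 1) / (U - 1) := by
      rw [div_mul_eq_mul_div, div_lt_div_iff₀ hUm1 hUm1]
      have hpow : U ^ (n' + 1) = U ^ n' * U := pow_succ U n'
      nlinarith [hUm1]
    linarith
  refine ⟨part1, ?_⟩
  -- part 2
  intro i
  have hKpos : (0:ℝ) < U ^ (n' + 1) - 1 := by
    have : (1:ℝ) < U ^ (n' + 1) := one_lt_pow₀ hu1 (Nat.succ_ne_zero n')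
    linarith
  obtain ⟨N, hN⟩ := hint (Fin.last n') i
  set Ssum : ℝ := ∑ j : Fin n', ((U ^ (j.1 + 1) - 1) / (U - 1))
      * A.mulVec (x j.castSucc) i with hSsum
  have hvSplit : v i = Ssum + ((U ^ (n' + 1) - 1) / (U - 1)) * (N : ℝ) := by
    rw [hv i, Fin.sum_univ_castSucc, ← hN]
    simp [hSsum]
  have hS0 : 0 ≤ Ssum := by
    refine Finset.sum_nonneg fun j _ => mul_nonneg ?_ (hmv0 _ i)
    apply div_nonneg _ hUm1.le
    have : (1:ℝ) ≤ U ^ (j.1 + 1) := one_le_pow₀ hu1.le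
    linarith
  have hexpr : (U - 1) / (U ^ (n' + 1) - 1) * v i
      = (N : ℝ) + (U - 1) / (U ^ (n' + 1) - 1) * Ssum := by
    rw [hvSplit]
    field_simp
    ring
  have hfrac0 : 0 ≤ (U - 1) / (U ^ (n' + 1) - 1) * Ssum :=
    mul_nonneg (div_nonneg hUm1.le hKpos.le) hS0
  have hfrac1 : (U - 1) / (U ^ (n' + 1) - 1) * Ssum < 1 := by
    have h := part1 i
    rw [← hSsum] at h
    calc (U - 1) / (U ^ (n' + 1) - 1) * Ssum
        < (U - 1) / (U ^ (n' + 1) - 1) * ((U ^ (n' + 1) - 1) / (U - 1)) := by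
          exact mul_lt_mul_of_pos_left h (div_pos hUm1 hKpos)
      _ = 1 := by field_simp
  rw [hexpr, ← hN]
  rw [hN]
  have : (⌊(N : ℝ) + (U - 1) / (U ^ (n' + 1) - 1) * Ssum⌋ : ℤ) = N := by
    rw [show ((N : ℕ) : ℝ) = ((N : ℤ) : ℝ) by push_cast; ring,
      Int.floor_intCast_add]
    rw [Int.floor_eq_zero_iff.mpr ⟨hfrac0, hfrac1⟩]
    ring
  rw [this]
  push_cast
  ring
end
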